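/- arXiv:1911.03732 — 4 statements merged into one kernel-verified Lean document; each statement's English description precedes it below -/
import Mathlib

section
/- Let K be a number field of degree n over ℚ and let Z_K be its ring of integers. Let X be a set of positive integers such that the series ∑_{m ∈ X} 1/m diverges. Let A be the set of principal ideals a·Z_K of Z_K such that a is an irreducible element (atom) of Z_K and a divides (in Z_K) some element m of X. Then the series ∑_{𝔞 ∈ A} N(𝔞)^{-1/n} diverges, i.e., the family (N(𝔞)^{-1/n})_{𝔞 ∈ A} of nonnegative real numbers is not summable. -/
open Finset in
lemma summable_multiset_prod_aux {ι : Type*} {t : ι → ℝ} {c : ℝ}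
    (hc0 : 0 ≤ c) (hc : c < 1)
    (h0 : ∀ i, 0 ≤ t i) (hle : ∀ i, t i ≤ c) (ht : Summable t) :
    Summable (fun μ : Multiset ι => (μ.map t).prod) := by
  classical
  have htlt : ∀ i, t i < 1 := fun i => lt_of_le_of_lt (hle i) hc
  have hnn : ∀ μ : Multiset ι, 0 ≤ (μ.map t).prod := by
    intro μ
    apply Multiset.prod_nonneg
    intro x hx
    obtain ⟨i, _, rfl⟩ := Multiset.mem_map.mp hx
    exact h0 i
  apply summable_of_sum_le (c := Real.exp ((∑' i, t i) / (1 - c))) hnn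
  intro U
  set F : Finset ι := U.sup Multiset.toFinset with hF
  set Kk : ℕ := U.sup Multiset.card with hKk
  have hc1 : 0 < 1 - c := by linarith
  have key : ∀ μ ∈ U, (μ.map t).prod = ∏ i ∈ F, t i ^ μ.count i := by
    intro μ hμ
    rw [Finset.prod_multiset_map_count]
    apply Finset.prod_subset
    · exact Finset.le_sup (f := Multiset.toFinset) hμ
    · intro x _ hx
      rw [Multiset.count_eq_zero.mpr (fun hxx => hx (Multiset.mem_toFinset.mpr hxx)), pow_zero]
  let e : Multiset ι → (∀ a ∈ F, ℕ) := fun μ => fun i _ => μ.count i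
  have hinj : ∀ μ ∈ U, ∀ ν ∈ U, e μ = e ν → μ = ν := by
    intro μ hμ ν hν h
    ext a
    by_cases haF : a ∈ F
    · exact congrFun (congrFun h a) haF
    · rw [Multiset.count_eq_zero.mpr, Multiset.count_eq_zero.mpr]
      · intro ha
        exact haF (Finset.le_sup (f := Multiset.toFinset) hν (Multiset.mem_toFinset.mpr ha))
      · intro ha
        exact haF (Finset.le_sup (f := Multiset.toFinset) hμ (Multiset.mem_toFinset.mpr ha))
  have himg : U.image e ⊆ F.pi (fun _ => Finset.range (Kk + 1)) := by
    intro p hp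
    obtain ⟨μ, hμ, rfl⟩ := Finset.mem_image.mp hp
    refine Finset.mem_pi.mpr fun i hi => Finset.mem_range.mpr ?_
    exact Nat.lt_succ_of_le ((Multiset.count_le_card i μ).trans (Finset.le_sup hμ))
  have geom : ∀ i ∈ F, ∑ k ∈ Finset.range (Kk + 1), t i ^ k ≤ Real.exp (t i / (1 - c)) := by
    intro i _
    have h1 : ∑ k ∈ Finset.range (Kk + 1), t i ^ k ≤ (1 - t i)⁻¹ := by
      rw [← tsum_geometric_of_lt_one (h0 i) (htlt i)]
      exact Summable.sum_le_tsum _ (fun k _ => pow_nonneg (h0 i) k)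
        (summable_geometric_of_lt_one (h0 i) (htlt i))
    refine h1.trans ?_
    have h2 : t i / (1 - c) + 1 ≤ Real.exp (t i / (1 - c)) := Real.add_one_le_exp _
    have h3 : 0 < 1 - t i := by linarith [htlt i]
    have h5 : 0 ≤ t i * (c - t i) := mul_nonneg (h0 i) (by linarith [hle i])
    have h7 : t i / (1 - c) * (1 - c) = t i := div_mul_cancel₀ _ (ne_of_gt hc1)
    have h8 : 0 ≤ t i / (1 - c) := div_nonneg (h0 i) hc1.le
    have h9 : 0 ≤ c - t i := by linarith [hle i]
    rw [inv_eq_one_div, div_le_iff₀ h3]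
    nlinarith [mul_nonneg (sub_nonneg.mpr h2) h3.le, mul_nonneg h8 h9, h7]
  calc ∑ μ ∈ U, (μ.map t).prod
      = ∑ μ ∈ U, ∏ i ∈ F, t i ^ μ.count i := Finset.sum_congr rfl key
    _ = ∑ p ∈ U.image e, ∏ x ∈ F.attach, t x.1 ^ p x.1 x.2 := by
        rw [Finset.sum_image hinj]
        exact Finset.sum_congr rfl fun μ _ => (Finset.prod_attach F fun i => t i ^ μ.count i).symm
    _ ≤ ∑ p ∈ F.pi (fun _ => Finset.range (Kk + 1)), ∏ x ∈ F.attach, t x.1 ^ p x.1 x.2 := by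
        refine Finset.sum_le_sum_of_subset_of_nonneg himg fun p _ _ => ?_
        exact Finset.prod_nonneg fun x _ => pow_nonneg (h0 x.1) _
    _ = ∏ i ∈ F, ∑ k ∈ Finset.range (Kk + 1), t i ^ k :=
        (Finset.prod_sum F (fun _ => Finset.range (Kk + 1)) (fun i k => t i ^ k)).symm
    _ ≤ ∏ i ∈ F, Real.exp (t i / (1 - c)) := by
        refine Finset.prod_le_prod (fun i _ => ?_) geom
        exact Finset.sum_nonneg fun k _ => pow_nonneg (h0 i) k
    _ = Real.exp (∑ i ∈ F, t i / (1 - c)) := (Real.exp_sum F _).symm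
    _ ≤ Real.exp ((∑' i, t i) / (1 - c)) := by
        rw [Real.exp_le_exp, ← Finset.sum_div]
        exact (div_le_div_iff_of_pos_right hc1).mpr (Summable.sum_le_tsum F (fun i _ => h0 i) ht)

set_option maxHeartbeats 1000000 in
set_option synthInstance.maxHeartbeats 400000 in
/-- **Theorem 1 (main result).** Let `K` be a number field of degree `n`, let `X` be a set of
positive integers such that `∑_{m ∈ X} 1/m` diverges, and let `A` be the set of principal ideals
`a·Z_K` of `Z_K` for which `a` is an atom and `a ∣ m` in `Z_K` for some `m ∈ X`. Then the series
`∑_{𝔞 ∈ A} N(𝔞)^{-1/n}` diverges. -/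
theorem stmt0 (K : Type*) [Field K] [NumberField K]
    (n : ℕ) (hn : n = Module.finrank ℚ K)
    (X : Set ℕ) (hXpos : ∀ m ∈ X, 0 < m)
    (hX : ¬ Summable (fun m : X => (1 : ℝ) / (m : ℝ)))
    (A : Set (Ideal (NumberField.RingOfIntegers K)))
    (hA : A = {I : Ideal (NumberField.RingOfIntegers K) |
      ∃ a : NumberField.RingOfIntegers K, Irreducible a ∧ I = Ideal.span {a} ∧
        ∃ m ∈ X, a ∣ (m : NumberField.RingOfIntegers K)}) :
    ¬ Summable (fun I : A =>
      ((Ideal.absNorm (I : Ideal (NumberField.RingOfIntegers K)) : ℝ)) ^ (-(1 : ℝ) / n)) := by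
  classical
  set R := NumberField.RingOfIntegers K with hR
  have hn0 : 0 < n := by
    rw [hn]; exact Module.finrank_pos
  have hnR : (0:ℝ) < (n:ℝ) := by exact_mod_cast hn0
  have hexp_neg : -(1:ℝ) / n < 0 := div_neg_of_neg_of_pos (by norm_num) hnR
  haveI : IsNoetherianRing R := by infer_instance
  haveI : WfDvdMonoid R := IsNoetherianRing.wfDvdMonoid
  intro hsum
  apply hX
  set t : A → ℝ := fun I => ((Ideal.absNorm (I : Ideal R) : ℝ)) ^ (-(1 : ℝ) / n) with hT
  -- norms of ideals in A are at least 2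
  have hnorm2 : ∀ I : A, 2 ≤ Ideal.absNorm (I : Ideal R) := by
    rintro ⟨I, hI⟩
    rw [hA] at hI
    obtain ⟨a, hairr, rfl, -⟩ := hI
    show 2 ≤ Ideal.absNorm (Ideal.span {a})
    have h1 : Ideal.absNorm (Ideal.span {a}) ≠ 0 := by
      rw [ne_eq, Ideal.absNorm_eq_zero_iff, Ideal.span_singleton_eq_bot]
      exact hairr.ne_zero
    have h2 : Ideal.absNorm (Ideal.span {a}) ≠ 1 := by
      rw [ne_eq, Ideal.absNorm_eq_one_iff, Ideal.span_singleton_eq_top]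
      exact hairr.not_isUnit
    omega
  have h0 : ∀ I : A, 0 ≤ t I := fun I => Real.rpow_nonneg (Nat.cast_nonneg _) _
  have hle : ∀ I : A, t I ≤ (2:ℝ) ^ (-(1:ℝ)/n) := by
    intro I
    exact Real.rpow_le_rpow_of_nonpos zero_lt_two (by exact_mod_cast hnorm2 I) hexp_neg.le
  have hc0 : (0:ℝ) ≤ (2:ℝ) ^ (-(1:ℝ)/n) := Real.rpow_nonneg (by norm_num) _
  have hc1 : (2:ℝ) ^ (-(1:ℝ)/n) < 1 :=
    Real.rpow_lt_one_of_one_lt_of_neg one_lt_two hexp_neg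
  have hsumW : Summable (fun μ : Multiset A => (μ.map t).prod) :=
    summable_multiset_prod_aux hc0 hc1 h0 hle hsum
  -- factor each m ∈ X into irreducibles
  have hm0 : ∀ m : X, ((m : ℕ) : R) ≠ 0 := by
    intro m
    exact_mod_cast Nat.cast_ne_zero.mpr (hXpos m m.2).ne'
  have hfac : ∀ m : X, ∃ f : Multiset R,
      (∀ b ∈ f, Irreducible b) ∧ Associated f.prod ((m : ℕ) : R) :=
    fun m => WfDvdMonoid.exists_factors _ (hm0 m)
  choose f hirr hassoc using hfac
  have hmemA : ∀ (m : X), ∀ b ∈ f m, Ideal.span {b} ∈ A := by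
    intro m b hb
    rw [hA]
    exact ⟨b, hirr m b hb, rfl, m, m.2, (Multiset.dvd_prod hb).trans (hassoc m).dvd⟩
  set e : X → Multiset A :=
    fun m => (f m).attach.map (fun b => (⟨Ideal.span {b.1}, hmemA m b.1 b.2⟩ : A)) with he
  -- the norm of span {m} is m ^ n
  have hnorm_span : ∀ m : ℕ, Ideal.absNorm (Ideal.span {((m : ℕ) : R)}) = m ^ n := by
    intro m
    rw [Ideal.absNorm_span_singleton]
    have h1 : ((m : ℕ) : R) = algebraMap ℤ R ((m : ℕ) : ℤ) := by push_cast; rfl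
    rw [h1, Algebra.norm_algebraMap_of_basis (NumberField.RingOfIntegers.basis K)]
    rw [← Module.finrank_eq_card_chooseBasisIndex, NumberField.RingOfIntegers.rank, ← hn]
    rw [← Nat.cast_pow]
    exact Int.natAbs_natCast _
  -- the product formula for weights
  have hprod : ∀ s : Multiset R,
      (s.map (fun b => ((Ideal.absNorm (Ideal.span {b}) : ℝ)) ^ (-(1:ℝ)/n))).prod
        = ((Ideal.absNorm (Ideal.span {s.prod}) : ℝ)) ^ (-(1:ℝ)/n) := by
    intro s
    induction s using Multiset.induction with
    | empty => simp [Ideal.span_singleton_one]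
    | cons a s ih =>
      rw [Multiset.map_cons, Multiset.prod_cons, ih, Multiset.prod_cons,
        ← Ideal.span_singleton_mul_span_singleton, _root_.map_mul, Nat.cast_mul,
        Real.mul_rpow (Nat.cast_nonneg _) (Nat.cast_nonneg _)]
  have hW : ∀ m : X, ((e m).map t).prod = 1 / (m : ℝ) := by
    intro m
    have hmpos : (0:ℝ) < ((m:ℕ):ℝ) := by exact_mod_cast hXpos m m.2
    have h2 : (e m).map t = (f m).map
        (fun b => ((Ideal.absNorm (Ideal.span {b}) : ℝ)) ^ (-(1:ℝ)/n)) := by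
      rw [he, Multiset.map_map]
      exact Multiset.attach_map_val' (f m)
        (fun b => ((Ideal.absNorm (Ideal.span {b}) : ℝ)) ^ (-(1:ℝ)/n))
    rw [h2, hprod,
      Ideal.span_singleton_eq_span_singleton.mpr (hassoc m), hnorm_span]
    rw [Nat.cast_pow, ← Real.rpow_natCast ((m:ℕ):ℝ) n, ← Real.rpow_mul hmpos.le]
    have hexp : (n:ℝ) * (-(1:ℝ)/n) = -1 := by field_simp
    rw [hexp, Real.rpow_neg_one, one_div]
  have hinj : Function.Injective e := by
    intro m1 m2 h
    have h1 := hW m1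
    rw [h, hW m2] at h1
    rw [one_div, one_div, inv_inj] at h1
    exact Subtype.ext (by exact_mod_cast h1.symm)
  exact ((hsumW.comp_injective hinj).congr (fun m => hW m))
end

section
/- Let K be a number field with ring of integers Z_K, and let X be a set of positive integers such that the series ∑_{m ∈ X} 1/m diverges. Then the set A of principal ideals a·Z_K of Z_K, where a is an irreducible element (atom) of Z_K dividing some element m of X, is infinite. -/
/-!
If only finitely many primes divided elements of `X`, then `X` would consist (apart from `0`)
of `s`-factored numbers for a finite set of primes `s`, and `∑ 1/m` over those converges to the
Euler product `∏_{p ∈ s} (1 - 1/p)⁻¹`. So infinitely many rational primes divide elements of `X`.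
Each such prime `p` is a nonzero nonunit of `Z_K` and so has an atom factor `a_p`; distinct primes
are coprime in `Z_K`, so the ideals `a_p Z_K` are pairwise distinct.
-/

lemma Nat.summable_one_div_factoredNumbers (s : Finset ℕ) :
    Summable (fun m : Nat.factoredNumbers s => (1 : ℝ) / m) := by
  let f : ℕ →* ℝ := invMonoidHom.comp (Nat.castRingHom ℝ : ℕ →* ℝ)
  have hf : ∀ {p : ℕ}, p.Prime → ‖f p‖ < 1 := fun hp => by
    simpa [f, abs_of_nonneg] using inv_lt_one_of_one_lt₀ (Nat.one_lt_cast.mpr hp.one_lt)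
  simpa [f] using
    (EulerProduct.summable_and_hasSum_factoredNumbers_prod_filter_prime_geometric hf s).1.of_norm

lemma Nat.infinite_setOf_prime_dvd_of_not_summable_one_div {X : Set ℕ}
    (hX : ¬ Summable (fun m : X => (1 : ℝ) / m)) :
    {p : ℕ | p.Prime ∧ ∃ m ∈ X, p ∣ m}.Infinite := by
  intro hP
  apply hX
  set S := Nat.factoredNumbers hP.toFinset
  have hXS : ∀ m ∈ X, m ≠ 0 → m ∈ S := fun m hm hm0 =>
    ⟨hm0, fun p hp => hP.mem_toFinset.mpr
      ⟨Nat.prime_of_mem_primeFactorsList hp, m, hm, Nat.dvd_of_mem_primeFactorsList hp⟩⟩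
  have hS : Summable (S.indicator fun m : ℕ => (1 : ℝ) / m) :=
    summable_subtype_iff_indicator.mp (Nat.summable_one_div_factoredNumbers hP.toFinset)
  have hle : X.indicator (fun m : ℕ => (1 : ℝ) / m) ≤ S.indicator fun m : ℕ => (1 : ℝ) / m := by
    intro m
    by_cases hm0 : m = 0
    · simp [hm0, Set.indicator]
    by_cases hm : m ∈ X
    · simp [hm, hXS m hm hm0]
    · simp only [Set.indicator_of_notMem hm]
      exact Set.indicator_nonneg (fun _ _ => by positivity) m
  exact summable_subtype_iff_indicator.mpr <|
    hS.of_nonneg_of_le (Set.indicator_nonneg fun _ _ => by positivity) hle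

section

variable {R : Type*} [CommRing R]

lemma Irreducible.eq_of_dvd_natCast_prime {a : R} (ha : Irreducible a) {p q : ℕ}
    (hp : p.Prime) (hq : q.Prime) (hap : a ∣ p) (haq : a ∣ q) : p = q := by
  by_contra hpq
  exact ha.not_isUnit (((Nat.coprime_primes hp hq).mpr hpq).cast.isUnit_of_dvd' hap haq)

lemma exists_irreducible_dvd_natCast_prime [WfDvdMonoid R] [CharZero R]
    [IsLocalHom (algebraMap ℤ R)] {p : ℕ} (hp : p.Prime) :
    ∃ a : R, Irreducible a ∧ a ∣ (p : R) := by
  have hunit : ¬ IsUnit (p : R) := by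
    rw [← map_natCast (algebraMap ℤ R), isUnit_map_iff, Int.isUnit_iff]
    have := hp.one_lt
    omega
  exact WfDvdMonoid.exists_irreducible_factor hunit (Nat.cast_ne_zero.mpr hp.ne_zero)

theorem infinite_setOf_span_irreducible_dvd_natCast [IsDomain R] [WfDvdMonoid R] [CharZero R]
    [IsLocalHom (algebraMap ℤ R)] {X : Set ℕ}
    (hX : {p : ℕ | p.Prime ∧ ∃ m ∈ X, p ∣ m}.Infinite) :
    {I : Ideal R | ∃ a : R, Irreducible a ∧ I = Ideal.span {a} ∧ ∃ m ∈ X, a ∣ (m : R)}.Infinite := by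
  have : Infinite {p : ℕ | p.Prime ∧ ∃ m ∈ X, p ∣ m} := hX.to_subtype
  choose a ha hap using fun p : {p : ℕ | p.Prime ∧ ∃ m ∈ X, p ∣ m} =>
    exists_irreducible_dvd_natCast_prime (R := R) p.2.1
  refine Set.infinite_of_injective_forall_mem (f := fun p => Ideal.span {a p}) (fun p q hpq => ?_)
    fun p => ?_
  · have hassoc : Associated (a p) (a q) := Ideal.span_singleton_eq_span_singleton.mp hpq
    exact Subtype.ext <| (ha p).eq_of_dvd_natCast_prime p.2.1 q.2.1 (hap p)
      (hassoc.dvd.trans (hap q))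
  · obtain ⟨-, m, hm, hpm⟩ := p.2
    exact ⟨a p, ha p, rfl, m, hm, (hap p).trans (Nat.cast_dvd_cast hpm)⟩

end

theorem stmt1_general (K : Type*) [Field K] [NumberField K]
    (X : Set ℕ)
    (hX : ¬ Summable (fun m : X => (1 : ℝ) / (m : ℝ)))
    (A : Set (Ideal (NumberField.RingOfIntegers K)))
    (hA : A = {I : Ideal (NumberField.RingOfIntegers K) |
      ∃ a : NumberField.RingOfIntegers K, Irreducible a ∧ I = Ideal.span {a} ∧
        ∃ m ∈ X, a ∣ (m : NumberField.RingOfIntegers K)}) :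
    A.Infinite :=
  hA ▸ infinite_setOf_span_irreducible_dvd_natCast
    (Nat.infinite_setOf_prime_dvd_of_not_summable_one_div hX)

/-- Let `K` be a number field and `X` a set of positive integers with `∑_{m ∈ X} 1/m = ∞`.
Then the set of principal ideals of `Z_K` generated by an atom dividing some `m ∈ X`
is infinite. -/
theorem stmt1 (K : Type*) [Field K] [NumberField K]
    (X : Set ℕ) (hXpos : ∀ m ∈ X, 0 < m)
    (hX : ¬ Summable (fun m : X => (1 : ℝ) / (m : ℝ)))
    (A : Set (Ideal (NumberField.RingOfIntegers K)))
    (hA : A = {I : Ideal (NumberField.RingOfIntegers K) |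
      ∃ a : NumberField.RingOfIntegers K, Irreducible a ∧ I = Ideal.span {a} ∧
        ∃ m ∈ X, a ∣ (m : NumberField.RingOfIntegers K)}) :
    A.Infinite :=
  stmt1_general K X hX A hA
end

section
/- Let K be a number field of degree n over ℚ, let Z_K be its ring of integers, and let A be the set of all principal ideals of Z_K generated by an irreducible element (atom) of Z_K. Then the series ∑_{𝔞 ∈ A} N(𝔞)^{-1/n} diverges, i.e., the family (N(𝔞)^{-1/n})_{𝔞 ∈ A} of nonnegative real numbers is not summable. -/
/-!
Every rational prime `p` has an irreducible factor `a_p` in `𝓞 K`, since `p` is not a unit there.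
Distinct primes are coprime, so `p ↦ (a_p)` injects the primes into the atomic principal ideals,
and `(a_p) ⊇ (p)` gives `N(a_p) ≤ N(p) = p ^ n`, i.e. `N(a_p) ^ (-1/n) ≥ 1/p`. The series is
therefore bounded below by the divergent sum of the prime reciprocals.
-/

open Ideal
open scoped NumberField

section Norm

variable {S : Type*} [CommRing S] [IsDedekindDomain S] [Module.Free ℤ S] [Module.Finite ℤ S]

theorem Ideal.absNorm_span_dvd_pow_of_dvd_natCast {a : S} {m : ℕ} (h : a ∣ (m : S)) :
    absNorm (span {a}) ∣ m ^ Module.finrank ℤ S := by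
  rw [← absNorm_span_natCast]
  exact absNorm_dvd_absNorm_of_le (span_singleton_le_span_singleton.mpr h)

theorem not_isUnit_natCast_of_one_lt {m : ℕ} (hm : 1 < m) : ¬ IsUnit (m : S) := by
  intro hunit
  have hnorm := absNorm_eq_one_iff.mpr (span_singleton_eq_top.mpr hunit)
  rw [absNorm_span_natCast, pow_eq_one_iff] at hnorm
  exact hnorm.elim hm.ne' Module.finrank_pos.ne'

theorem natCast_ne_zero_of_ne_zero {m : ℕ} (hm : m ≠ 0) : (m : S) ≠ 0 := by
  intro hzero
  have hnorm := absNorm_span_natCast (S := S) m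
  rw [hzero, Set.singleton_zero, span_zero, absNorm_bot] at hnorm
  exact pow_ne_zero _ hm hnorm.symm

theorem exists_irreducible_dvd_natCast {m : ℕ} (hm : 1 < m) :
    ∃ a : S, Irreducible a ∧ a ∣ (m : S) :=
  WfDvdMonoid.exists_irreducible_factor (not_isUnit_natCast_of_one_lt hm)
    (natCast_ne_zero_of_ne_zero (by omega))

end Norm

theorem isUnit_of_dvd_natCast_of_coprime {R : Type*} [CommRing R] {a : R} {p q : ℕ}
    (hpq : p.Coprime q) (hp : a ∣ (p : R)) (hq : a ∣ (q : R)) : IsUnit a :=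
  (Nat.Coprime.cast hpq).isUnit_of_dvd' hp hq

theorem Real.one_div_le_rpow_neg_one_div_of_le_pow {x y : ℝ} {n : ℕ} (hn : n ≠ 0) (hx : 0 < x)
    (hy : 0 ≤ y) (hxy : x ≤ y ^ n) : 1 / y ≤ x ^ (-1 / n : ℝ) := by
  have hroot : x ^ (n⁻¹ : ℝ) ≤ y :=
    (rpow_inv_le_iff_of_pos hx.le hy (by positivity)).mpr (by exact_mod_cast hxy)
  rw [neg_div, one_div, rpow_neg hx.le, one_div]
  exact inv_anti₀ (by positivity) hroot

/-- **Corollary 1.** Let `K` be a number field of degree `n` and `A` the set of principal ideals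
of `Z_K` generated by an atom. Then `∑_{𝔞 ∈ A} N(𝔞)^{-1/n}` diverges. -/
theorem stmt2 (K : Type*) [Field K] [NumberField K]
    (n : ℕ) (hn : n = Module.finrank ℚ K)
    (A : Set (Ideal (NumberField.RingOfIntegers K)))
    (hA : A = {I : Ideal (NumberField.RingOfIntegers K) |
      ∃ a : NumberField.RingOfIntegers K, Irreducible a ∧ I = Ideal.span {a}}) :
    ¬ Summable (fun I : A =>
      ((Ideal.absNorm (I : Ideal (NumberField.RingOfIntegers K)) : ℝ)) ^ (-(1 : ℝ) / n)) := by
  rw [hn, ← NumberField.RingOfIntegers.rank]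
  choose a ha hdvd using fun p : Nat.Primes =>
    exists_irreducible_dvd_natCast (S := 𝓞 K) p.2.one_lt
  let ι : Nat.Primes → A := fun p => ⟨span {a p}, hA ▸ ⟨a p, ha p, rfl⟩⟩
  have hι : Function.Injective ι := by
    intro p q hpq
    by_contra hne
    have hdvd' : a p ∣ (q : 𝓞 K) :=
      (span_singleton_le_span_singleton.mp (congrArg Subtype.val hpq).ge).trans (hdvd q)
    exact (ha p).not_isUnit <| isUnit_of_dvd_natCast_of_coprime
      ((Nat.coprime_primes p.2 q.2).mpr (mt (@Nat.Primes.coe_nat_injective p q) hne)) (hdvd p) hdvd'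
  intro hsum
  refine Nat.Primes.not_summable_one_div <|
    (hsum.comp_injective hι).of_nonneg_of_le (fun _ => by positivity) fun p => ?_
  have hN := absNorm_span_dvd_pow_of_dvd_natCast (hdvd p)
  have hpow : 0 < (p : ℕ) ^ Module.finrank ℤ (𝓞 K) := pow_pos p.2.pos _
  exact Real.one_div_le_rpow_neg_one_div_of_le_pow Module.finrank_pos.ne'
    (by exact_mod_cast Nat.pos_of_dvd_of_pos hN hpow) (Nat.cast_nonneg _)
    (by exact_mod_cast Nat.le_of_dvd hpow hN)
end

section
/- Let K be a number field of degree n over ℚ, let Z_K be its ring of integers, and let A be the set of principal ideals a·Z_K of Z_K such that a is an irreducible element (atom) of Z_K and a divides (in Z_K) some positive rational prime p. Then the series ∑_{𝔞 ∈ A} N(𝔞)^{-1/n} diverges, i.e., the family (N(𝔞)^{-1/n})_{𝔞 ∈ A} of nonnegative real numbers is not summable. -/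
private lemma norm_int_cast_aux (K : Type*) [Field K] [NumberField K]
    (m : ℤ) : Algebra.norm ℤ (algebraMap ℤ (NumberField.RingOfIntegers K) m)
      = m ^ Module.finrank ℚ K := by
  rw [Algebra.norm_algebraMap_of_basis (Module.Free.chooseBasis ℤ (NumberField.RingOfIntegers K)),
    ← Module.finrank_eq_card_chooseBasisIndex, NumberField.RingOfIntegers.rank K]

/-- **Corollary 3.** Let `K` be a number field of degree `n` and `A` the set of principal ideals
`a·Z_K` of `Z_K` such that `a` is an atom and `a ∣ p` in `Z_K` for some positive rational prime
`p`. Then `∑_{𝔞 ∈ A} N(𝔞)^{-1/n}` diverges. -/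
theorem stmt5 (K : Type*) [Field K] [NumberField K]
    (n : ℕ) (hn : n = Module.finrank ℚ K)
    (A : Set (Ideal (NumberField.RingOfIntegers K)))
    (hA : A = {I : Ideal (NumberField.RingOfIntegers K) |
      ∃ a : NumberField.RingOfIntegers K, Irreducible a ∧ I = Ideal.span {a} ∧
        ∃ p : ℕ, p.Prime ∧ a ∣ (p : NumberField.RingOfIntegers K)}) :
    ¬ Summable (fun I : A =>
      ((Ideal.absNorm (I : Ideal (NumberField.RingOfIntegers K)) : ℝ)) ^ (-(1 : ℝ) / n)) := by
  set R := NumberField.RingOfIntegers K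
  intro hsum
  have hn0 : 0 < n := by
    rw [hn]; exact Module.finrank_pos
  -- for each prime p, pick an irreducible factor of p in R
  have hexists : ∀ p : Nat.Primes, ∃ a : R, Irreducible a ∧ a ∣ (p : ℕ) := by
    intro p
    have hne : ((p : ℕ) : R) ≠ 0 := by
      exact_mod_cast Nat.cast_ne_zero.mpr p.2.pos.ne'
    have hnu : ¬ IsUnit ((p : ℕ) : R) := by
      intro hu
      have h1 : Ideal.span {((p : ℕ) : R)} = ⊤ := Ideal.span_singleton_eq_top.mpr hu
      have h2 : Ideal.absNorm (Ideal.span {((p : ℕ) : R)}) = 1 := by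
        rw [h1, Ideal.absNorm_top]
      rw [Ideal.absNorm_span_singleton] at h2
      have h3 : Algebra.norm ℤ ((p : ℕ) : R) = ((p : ℕ) : ℤ) ^ Module.finrank ℚ K := by
        have : ((p : ℕ) : R) = algebraMap ℤ R ((p : ℕ) : ℤ) := by push_cast; ring
        rw [this]; exact norm_int_cast_aux K _
      rw [h3] at h2
      simp only [Int.natAbs_pow, Int.natAbs_natCast] at h2
      have hp2 := p.2.two_le
      have hfpos : 0 < Module.finrank ℚ K := Module.finrank_pos
      have : (p : ℕ) ^ Module.finrank ℚ K ≥ 2 ^ 1 := by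
        calc (p : ℕ) ^ Module.finrank ℚ K ≥ 2 ^ Module.finrank ℚ K :=
              Nat.pow_le_pow_left hp2 _
          _ ≥ 2 ^ 1 := Nat.pow_le_pow_right (by norm_num) hfpos
      omega
    haveI : WfDvdMonoid R := IsNoetherianRing.wfDvdMonoid
    obtain ⟨a, ha, hdvd⟩ := WfDvdMonoid.exists_irreducible_factor hnu hne
    exact ⟨a, ha, hdvd⟩
  choose f hf1 hf2 using hexists
  -- the map sending p to the principal ideal (f p)
  set g : Nat.Primes → A := fun p =>
    ⟨Ideal.span {f p}, by
      rw [hA]; exact ⟨f p, hf1 p, rfl, (p : ℕ), p.2, hf2 p⟩⟩ with hg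
  have hginj : Function.Injective g := by
    intro p q hpq
    by_contra hne
    have hspan : Ideal.span {f p} = Ideal.span {f q} := congrArg Subtype.val hpq
    have hdvd : f q ∣ f p := Ideal.span_singleton_le_span_singleton.mp hspan.le
    have hdp : f q ∣ ((p : ℕ) : R) := hdvd.trans (hf2 p)
    have hdq : f q ∣ ((q : ℕ) : R) := hf2 q
    have hcop : IsCoprime ((p : ℕ) : ℤ) ((q : ℕ) : ℤ) := by
      rw [Int.isCoprime_iff_gcd_eq_one]
      exact_mod_cast (Nat.coprime_primes p.2 q.2).mpr (fun h => hne (Subtype.ext h))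
    have hcopR : IsCoprime ((p : ℕ) : R) ((q : ℕ) : R) := by
      have := hcop.map (algebraMap ℤ R)
      simpa using this
    exact (hf1 q).not_isUnit (hcopR.isUnit_of_dvd' hdp hdq)
  have hsum2 : Summable (fun p : Nat.Primes =>
      ((Ideal.absNorm ((g p : Ideal R)) : ℝ)) ^ (-(1 : ℝ) / n)) :=
    hsum.comp_injective hginj
  -- compare with 1/p
  refine Nat.Primes.not_summable_one_div (hsum2.of_nonneg_of_le
    (fun p => by positivity) (fun p => ?_))
  have hNle : (Ideal.absNorm (g p : Ideal R) : ℝ) ≤ ((p : ℕ) : ℝ) ^ (n : ℕ) := by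
    have hle : Ideal.span {((p : ℕ) : R)} ≤ Ideal.span {f p} :=
      Ideal.span_singleton_le_span_singleton.mpr (hf2 p)
    have hdvd : Ideal.absNorm (Ideal.span {f p}) ∣
        Ideal.absNorm (Ideal.span {((p : ℕ) : R)}) :=
      Ideal.absNorm_dvd_absNorm_of_le hle
    have hval : Ideal.absNorm (Ideal.span {((p : ℕ) : R)}) = (p : ℕ) ^ n := by
      rw [Ideal.absNorm_span_singleton]
      have : ((p : ℕ) : R) = algebraMap ℤ R ((p : ℕ) : ℤ) := by push_cast; ring
      rw [this, norm_int_cast_aux K]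
      simp [Int.natAbs_pow, hn]
    rw [hval] at hdvd
    have := Nat.le_of_dvd (pow_pos p.2.pos n) hdvd
    exact_mod_cast this
  have hNpos : (0 : ℝ) < (Ideal.absNorm (g p : Ideal R) : ℝ) := by
    have : Ideal.absNorm (Ideal.span {f p}) ≠ 0 := by
      rw [Ideal.absNorm_span_singleton]
      simp only [ne_eq, Int.natAbs_eq_zero, Algebra.norm_eq_zero_iff]
      exact (hf1 p).ne_zero
    exact_mod_cast Nat.pos_of_ne_zero this
  have key : (((p : ℕ) : ℝ) ^ (n : ℕ)) ^ (-(1 : ℝ) / n) ≤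
      (Ideal.absNorm (g p : Ideal R) : ℝ) ^ (-(1 : ℝ) / n) :=
    Real.rpow_le_rpow_of_nonpos hNpos hNle
      (by rw [neg_div]; exact neg_nonpos.mpr (by positivity))
  refine le_trans (le_of_eq ?_) key
  have hppos : (0 : ℝ) < ((p : ℕ) : ℝ) := by exact_mod_cast p.2.pos
  rw [← Real.rpow_natCast ((p : ℕ) : ℝ) n, ← Real.rpow_mul hppos.le]
  have hexp : (n : ℝ) * (-1 / n) = -1 := by
    field_simp
  rw [hexp, Real.rpow_neg_one, one_div]
end
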